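/- Let Z ⊆ U_r and let Z° denote the set of all freely reduced words in F_r whose cyclically reduced forms belong to Z. If Z is exponentially generic in U_r then Z° is exponentially generic in F_r. -/

import Mathlib

open scoped Classical

noncomputable section

/-- The free group of rank `r`, with free basis indexed by `Fin r`. -/
abbrev F (r : ℕ) := FreeGroup (Fin r)

/-- The freely reduced length of an element of the free group. -/
def wlen {r : ℕ} (w : F r) : ℕ := (FreeGroup.toWord w).length

/-- An element is cyclically reduced if the first letter of its reduced word is not the
inverse of the last letter. -/
def CyclicallyReduced {r : ℕ} (w : F r) : Prop :=
  ∀ x ∈ (FreeGroup.toWord w).head?, ∀ y ∈ (FreeGroup.toWord w).getLast?, x ≠ (y.1, !y.2)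

/-- The set of cyclically reduced elements of `F r`. -/
def Ur (r : ℕ) : Set (F r) := {w | CyclicallyReduced w}

/-- An element of a group is primitive if it belongs to some free basis of the group. -/
def IsPrimitive {G : Type} [Group G] (g : G) : Prop :=
  ∃ (ι : Type) (b : FreeGroupBasis ι G) (i : ι), b i = g

/-- `HasRank G n` says that `G` is free of rank `n` (with `n = ⊤` for infinite rank). -/
def HasRank (G : Type) [Group G] (n : ℕ∞) : Prop :=
  ∃ (ι : Type) (_b : FreeGroupBasis ι G), Cardinal.toENat (Cardinal.mk ι) = n

/-- The primitivity rank of `g`: the smallest rank of a subgroup containing `g` as a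
non-primitive element (`⊤ = ∞` if there is none). -/
def primitivityRank {r : ℕ} (g : F r) : ℕ∞ :=
  sInf {n : ℕ∞ | ∃ (H : Subgroup (F r)) (hg : g ∈ H),
    ¬ IsPrimitive (⟨g, hg⟩ : H) ∧ HasRank H n}

/-- The critical set of `g`: subgroups containing `g` as a non-primitive element whose rank
equals the primitivity rank of `g`. -/
def Crit {r : ℕ} (g : F r) : Set (Subgroup (F r)) :=
  {H | ∃ hg : g ∈ H, ¬ IsPrimitive (⟨g, hg⟩ : H) ∧ HasRank H (primitivityRank g)}

/-- `gam S n` is the number of elements of `S` of reduced length exactly `n`. -/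
def gam {r : ℕ} (S : Set (F r)) (n : ℕ) : ℕ := {w ∈ S | wlen w = n}.ncard

/-- `rho S n` is the number of elements of `S` of reduced length at most `n`. -/
def rho {r : ℕ} (S : Set (F r)) (n : ℕ) : ℕ := {w ∈ S | wlen w ≤ n}.ncard

/-- A sequence of reals converges to `l` exponentially fast. -/
def ExpFast (x : ℕ → ℝ) (l : ℝ) : Prop :=
  ∃ C : ℝ, 0 < C ∧ ∃ σ : ℝ, 0 < σ ∧ σ < 1 ∧ ∀ n : ℕ, |x n - l| ≤ C * σ ^ n

/-- `S` is exponentially negligible in `Z`. -/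
def ExpNegligibleIn {r : ℕ} (S Z : Set (F r)) : Prop :=
  ExpFast (fun n => (rho S n : ℝ) / (rho Z n : ℝ)) 0

/-- `S` is exponentially generic in `Z`. -/
def ExpGenericIn {r : ℕ} (S Z : Set (F r)) : Prop :=
  ExpNegligibleIn (Z \ S) Z

/-- `u` is the cyclically reduced form of `w`: `u` is cyclically reduced, conjugate to `w`
via `w = g u g⁻¹`, with no cancellation (`|w| = |u| + 2|g|`), as produced by cyclic reduction. -/
def IsCyclicallyReducedFormOf {r : ℕ} (u w : F r) : Prop :=
  CyclicallyReduced u ∧ ∃ g : F r, w = g * u * g⁻¹ ∧ wlen w = wlen u + 2 * wlen g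

/-- `Zcirc Z` is the set of all elements of `F r` whose cyclically reduced form lies in `Z`. -/
def Zcirc {r : ℕ} (Z : Set (F r)) : Set (F r) :=
  {w | ∃ u ∈ Z, IsCyclicallyReducedFormOf u w}

/-!
Every word `w` is `g u g⁻¹` without cancellation, `u` its cyclically reduced form, so the words
of length `≤ n` outside `Z°` are covered by pairs `(u, g)` with `u ∈ U_r \ Z`, `|u| ≤ n - 2k` and
`|g| = k`. With `t = 2r - 1`, spheres of radius `k` have at most `2 tᵏ` elements and the ball of
radius `n` at least `tⁿ`, so the pairs with `|g| = k` make up at most a constant times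
`σ^(n-2k) t^(-k) ≤ τⁿ` of the ball, where `τ = max σ t^(-1/2) < 1`. Summing over `k ≤ n/2` leaves
the bound `(n + 1) τⁿ`, still exponentially small.
-/

section ChainCount

variable {γ β : Type*} {R : γ → γ → Prop}

def stepsChain (e : ∀ x, β ≃ {y // R x y}) : γ → List β → List γ
  | x, [] => [x]
  | x, b :: bs => x :: stepsChain e (e x b) bs

variable (e : ∀ x, β ≃ {y // R x y})

@[simp]
theorem length_stepsChain (x : γ) (bs : List β) :
    (stepsChain e x bs).length = bs.length + 1 := by
  induction bs generalizing x <;> simp [stepsChain, *]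

theorem stepsChain_eq_cons (x : γ) (bs : List β) :
    ∃ L, stepsChain e x bs = x :: L := by
  cases bs <;> exact ⟨_, rfl⟩

theorem isChain_stepsChain (x : γ) (bs : List β) : (stepsChain e x bs).IsChain R := by
  induction bs generalizing x with
  | nil => exact List.isChain_singleton x
  | cons b bs ih =>
    obtain ⟨L, hL⟩ := stepsChain_eq_cons e (e x b) bs
    have := ih (e x b)
    rw [stepsChain, hL] at *
    exact List.isChain_cons_cons.mpr ⟨(e x b).2, this⟩

theorem stepsChain_inj {x x' : γ} {bs bs' : List β} (h : stepsChain e x bs = stepsChain e x' bs') :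
    x = x' ∧ bs = bs' := by
  induction bs generalizing x x' bs' with
  | nil =>
    cases bs' with
    | nil => simpa [stepsChain] using h
    | cons => simpa using congrArg List.length h
  | cons b bs ih =>
    cases bs' with
    | nil => simpa using congrArg List.length h
    | cons b' bs' =>
      obtain ⟨rfl, htail⟩ := List.cons_eq_cons.mp h
      obtain ⟨hb, rfl⟩ := ih htail
      simp [(e x).injective (Subtype.ext hb)]

theorem stepsChain_injective : Function.Injective (Function.uncurry (stepsChain e)) :=
  fun _ _ h => Prod.ext_iff.mpr (stepsChain_inj e h)

theorem exists_stepsChain_eq {L : List γ} (hL : L.IsChain R) (hne : L ≠ []) :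
    ∃ x bs, stepsChain e x bs = L := by
  induction L with
  | nil => exact absurd rfl hne
  | cons x L ih =>
    cases L with
    | nil => exact ⟨x, [], rfl⟩
    | cons y L =>
      obtain ⟨hxy, hL⟩ := List.isChain_cons_cons.mp hL
      obtain ⟨y', bs, h⟩ := ih hL (List.cons_ne_nil y L)
      obtain ⟨L', hL'⟩ := stepsChain_eq_cons e y' bs
      obtain rfl : y' = y := (List.cons_eq_cons.mp (hL'.symm.trans h)).1
      exact ⟨x, (e x).symm ⟨y', hxy⟩ :: bs, by simp [stepsChain, h]⟩

end ChainCount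

theorem ncard_setOf_length_eq (β : Type*) [Fintype β] (j : ℕ) :
    {l : List β | l.length = j}.ncard = Fintype.card β ^ j := by
  rw [← Nat.card_coe_set_eq, ← card_vector, ← Nat.card_eq_fintype_card]
  rfl

theorem ncard_setOf_isChain_length {γ : Type*} [Finite γ] {R : γ → γ → Prop} {d : ℕ}
    (hR : ∀ x, Nat.card {y // R x y} = d) (j : ℕ) :
    {L : List γ | L.IsChain R ∧ L.length = j + 1}.ncard = Nat.card γ * d ^ j := by
  let e x : Fin d ≃ {y // R x y} := (Finite.equivFinOfCardEq (hR x)).symm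
  have himage : Function.uncurry (stepsChain e) '' (Set.univ ×ˢ {bs | bs.length = j}) =
      {L : List γ | L.IsChain R ∧ L.length = j + 1} := by
    ext L
    constructor
    · rintro ⟨⟨x, bs⟩, ⟨-, hbs⟩, rfl⟩
      exact ⟨isChain_stepsChain e x bs, by simpa using hbs⟩
    · rintro ⟨hL, hlen⟩
      obtain ⟨x, bs, rfl⟩ := exists_stepsChain_eq e hL (List.ne_nil_of_length_eq_add_one hlen)
      exact ⟨(x, bs), ⟨trivial, by simpa using hlen⟩, rfl⟩
  rw [← himage, (stepsChain_injective e).injOn.ncard_image, Set.ncard_prod, Set.ncard_univ,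
    ncard_setOf_length_eq, Fintype.card_fin]

namespace FreeGroup

variable {α : Type*} [DecidableEq α]

theorem image_toWord_setOf_length_eq (n : ℕ) :
    toWord '' {w : FreeGroup α | w.toWord.length = n} = {L | IsReduced L ∧ L.length = n} := by
  ext L
  constructor
  · rintro ⟨w, hw, rfl⟩
    exact ⟨isReduced_toWord, hw⟩
  · rintro ⟨hL, rfl⟩
    exact ⟨mk L, by simp [hL.reduce_eq], by simp [hL.reduce_eq]⟩

theorem ncard_setOf_length_toWord_eq_succ [Fintype α] (j : ℕ) :
    {w : FreeGroup α | w.toWord.length = j + 1}.ncard =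
      2 * Fintype.card α * (2 * Fintype.card α - 1) ^ j := by
  have hsucc (x : α × Bool) :
      Nat.card {y : α × Bool // x.1 = y.1 → x.2 = y.2} = 2 * Fintype.card α - 1 := by
    have hne (y : α × Bool) : (x.1 = y.1 → x.2 = y.2) ↔ y ≠ (x.1, !x.2) := by
      obtain ⟨a, b⟩ := x
      obtain ⟨c, d⟩ := y
      cases b <;> cases d <;> simp [eq_comm]
    rw [Nat.card_congr (Equiv.subtypeEquivRight hne)]
    simp [Nat.card_eq_fintype_card, Fintype.card_subtype_compl, mul_comm]
  rw [← toWord_injective.injOn.ncard_image, image_toWord_setOf_length_eq]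
  refine (ncard_setOf_isChain_length hsucc j).trans ?_
  rw [Nat.card_eq_fintype_card, Fintype.card_prod, Fintype.card_bool, mul_comm (Fintype.card α)]

end FreeGroup

section CyclicReduction

open FreeGroup

variable {r : ℕ}

theorem cyclicallyReduced_iff (w : F r) : CyclicallyReduced w ↔ IsCyclicallyReduced w.toWord := by
  refine ⟨fun h => ⟨isReduced_toWord, fun a ha b hb hab => ?_⟩,
    fun h x hx y hy hxy => ?_⟩
  · by_contra hne
    exact h b hb a ha (Prod.ext hab.symm (Bool.eq_not_iff.mpr (Ne.symm hne)))
  · subst hxy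
    simpa using h.2 y hy _ hx rfl

theorem exists_isCyclicallyReducedFormOf (w : F r) : ∃ u, IsCyclicallyReducedFormOf u w := by
  set L := w.toWord
  set c := reduceCyclically.conjugator L
  have hL : c ++ reduceCyclically L ++ invRev c = L :=
    reduceCyclically.conj_conjugator_reduceCyclically L
  have hcyc : IsCyclicallyReduced (reduceCyclically L) :=
    reduceCyclically.isCyclicallyReduced isReduced_toWord
  have hc : IsReduced c :=
    isReduced_toWord.infix ⟨[], reduceCyclically L ++ invRev c, by simpa using hL⟩
  refine ⟨mk (reduceCyclically L), ?_, mk c, ?_, ?_⟩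
  · rwa [cyclicallyReduced_iff, toWord_mk, hcyc.isReduced.reduce_eq]
  · rw [inv_mk, mul_mk, mul_mk, hL, mk_toWord]
  · have := congrArg List.length hL
    simp only [List.length_append, invRev_length] at this
    simp only [wlen, toWord_mk, hcyc.isReduced.reduce_eq, hc.reduce_eq]
    change L.length = _
    omega

end CyclicReduction

section Counting

variable {r : ℕ}

theorem finite_setOf_wlen_le (S : Set (F r)) (n : ℕ) : {w ∈ S | wlen w ≤ n}.Finite :=
  ((List.finite_length_le _ n).preimage FreeGroup.toWord_injective.injOn).subset
    fun _ hw => hw.2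

theorem finite_setOf_wlen_eq (S : Set (F r)) (n : ℕ) : {w ∈ S | wlen w = n}.Finite :=
  (finite_setOf_wlen_le S n).subset fun _ hw => ⟨hw.1, hw.2.le⟩

theorem rho_mono {S T : Set (F r)} (h : S ⊆ T) (n : ℕ) : rho S n ≤ rho T n :=
  Set.ncard_le_ncard (fun _ hw => ⟨h hw.1, hw.2⟩) (finite_setOf_wlen_le T n)

theorem gam_le_rho (S : Set (F r)) (n : ℕ) : gam S n ≤ rho S n :=
  Set.ncard_le_ncard (fun _ hw => ⟨hw.1, hw.2.le⟩) (finite_setOf_wlen_le S n)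

theorem rho_succ_le (S : Set (F r)) (n : ℕ) : rho S (n + 1) ≤ rho S n + gam S (n + 1) := by
  have hsub : {w ∈ S | wlen w ≤ n + 1} ⊆ {w ∈ S | wlen w ≤ n} ∪ {w ∈ S | wlen w = n + 1} := by
    rintro w ⟨hwS, hw⟩
    rcases Nat.lt_or_eq_of_le hw with hlt | heq
    exacts [Or.inl ⟨hwS, Nat.le_of_lt_succ hlt⟩, Or.inr ⟨hwS, heq⟩]
  exact (Set.ncard_le_ncard hsub ((finite_setOf_wlen_le S n).union
    (finite_setOf_wlen_eq S (n + 1)))).trans (Set.ncard_union_le _ _)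

theorem rho_univ_zero : rho (Set.univ : Set (F r)) 0 = 1 := by
  simp [rho, wlen, Set.ncard_singleton]

theorem gam_univ_zero : gam (Set.univ : Set (F r)) 0 = 1 := by
  simp [gam, wlen, Set.ncard_singleton]

theorem gam_univ_succ (j : ℕ) : gam (Set.univ : Set (F r)) (j + 1) = 2 * r * (2 * r - 1) ^ j := by
  simpa [gam, wlen] using FreeGroup.ncard_setOf_length_toWord_eq_succ (α := Fin r) j

theorem gam_univ_le (k : ℕ) : gam (Set.univ : Set (F r)) k ≤ 2 * (2 * r - 1) ^ k := by
  cases k with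
  | zero => simp [gam_univ_zero]
  | succ j =>
    calc gam Set.univ (j + 1) = 2 * r * (2 * r - 1) ^ j := gam_univ_succ j
      _ ≤ 2 * (2 * r - 1) * (2 * r - 1) ^ j := Nat.mul_le_mul_right _ (by omega)
      _ = 2 * (2 * r - 1) ^ (j + 1) := by ring

theorem pow_le_rho_univ (n : ℕ) : (2 * r - 1) ^ n ≤ rho (Set.univ : Set (F r)) n := by
  cases n with
  | zero => simp [rho_univ_zero]
  | succ j =>
    calc (2 * r - 1) ^ (j + 1) ≤ 2 * r * (2 * r - 1) ^ j := by
          rw [pow_succ']; exact Nat.mul_le_mul_right _ (by omega)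
      _ = gam Set.univ (j + 1) := (gam_univ_succ j).symm
      _ ≤ rho Set.univ (j + 1) := gam_le_rho _ _

theorem rho_univ_le (hr : 2 ≤ r) (n : ℕ) :
    rho (Set.univ : Set (F r)) n ≤ (2 * r - 1) ^ (n + 1) := by
  set t := 2 * r - 1
  have h2r : 2 * r = t + 1 := by omega
  have ht : 2 * t + 1 ≤ t * t := by nlinarith
  induction n with
  | zero => simp [rho_univ_zero]; omega
  | succ n ih =>
    calc rho Set.univ (n + 1) ≤ t ^ (n + 1) + (t + 1) * t ^ n :=
          (rho_succ_le _ n).trans (by rw [gam_univ_succ, h2r, Nat.add_sub_cancel]; omega)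
      _ = (2 * t + 1) * t ^ n := by ring
      _ ≤ t * t * t ^ n := Nat.mul_le_mul_right _ ht
      _ = t ^ (n + 2) := by ring

end Counting

theorem rho_univ_diff_zcirc_le {r : ℕ} (Z : Set (F r)) (n : ℕ) :
    rho (Set.univ \ Zcirc Z) n ≤
      ∑ k ∈ Finset.range (n / 2 + 1),
        rho (Ur r \ Z) (n - 2 * k) * gam (Set.univ : Set (F r)) k := by
  let A (k : ℕ) : Set (F r × F r) :=
    {u ∈ Ur r \ Z | wlen u ≤ n - 2 * k} ×ˢ {g ∈ Set.univ | wlen g = k}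
  have hsub : {w ∈ Set.univ \ Zcirc Z | wlen w ≤ n} ⊆
      (fun p : F r × F r => p.2 * p.1 * p.2⁻¹) '' ⋃ k ∈ Finset.range (n / 2 + 1), A k := by
    rintro w ⟨⟨-, hwZ⟩, hwn⟩
    obtain ⟨u, hu, g, rfl, hlen⟩ := exists_isCyclicallyReducedFormOf w
    have huZ : u ∉ Z := fun huZ => hwZ ⟨u, huZ, hu, g, rfl, hlen⟩
    refine ⟨(u, g), Set.mem_biUnion (x := wlen g) ?_ ⟨⟨⟨hu, huZ⟩, ?_⟩, trivial, rfl⟩, rfl⟩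
    · rw [Finset.coe_range, Set.mem_Iio]
      omega
    · change wlen u ≤ n - 2 * wlen g
      omega
  have hfin : (⋃ k ∈ Finset.range (n / 2 + 1), A k).Finite :=
    (Finset.finite_toSet _).biUnion fun k _ =>
      (finite_setOf_wlen_le _ _).prod (finite_setOf_wlen_eq _ _)
  calc rho (Set.univ \ Zcirc Z) n
      ≤ ((fun p : F r × F r => p.2 * p.1 * p.2⁻¹) '' ⋃ k ∈ Finset.range (n / 2 + 1), A k).ncard :=
        Set.ncard_le_ncard hsub (hfin.image _)
    _ ≤ (⋃ k ∈ Finset.range (n / 2 + 1), A k).ncard := Set.ncard_image_le hfin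
    _ ≤ ∑ k ∈ Finset.range (n / 2 + 1), (A k).ncard := Finset.set_ncard_biUnion_le _ _
    _ = _ := by simp only [A, Set.ncard_prod]; rfl

theorem exists_succ_mul_pow_le {τ ρ : ℝ} (hτ : 0 ≤ τ) (hτρ : τ < ρ) :
    ∃ B > 0, ∀ n : ℕ, (n + 1) * τ ^ n ≤ B * ρ ^ n := by
  have hρ : 0 < ρ := hτ.trans_lt hτρ
  have hq0 : 0 ≤ τ / ρ := div_nonneg hτ hρ.le
  have hq1 : τ / ρ < 1 := (div_lt_one hρ).mpr hτρ
  have hlim : Filter.Tendsto (fun n : ℕ => (n + 1) * (τ / ρ) ^ n) Filter.atTop (nhds 0) := by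
    simpa [add_mul] using (tendsto_self_mul_const_pow_of_lt_one hq0 hq1).add
      (tendsto_pow_atTop_nhds_zero_of_lt_one hq0 hq1)
  obtain ⟨B, hB⟩ := hlim.bddAbove_range
  refine ⟨max B 1, by positivity, fun n => ?_⟩
  calc (n + 1) * τ ^ n = (n + 1) * (τ / ρ) ^ n * ρ ^ n := by
        rw [div_pow, mul_assoc, div_mul_cancel₀ _ (pow_ne_zero n hρ.ne')]
    _ ≤ max B 1 * ρ ^ n :=
        mul_le_mul_of_nonneg_right ((hB ⟨n, rfl⟩).trans (le_max_left B 1)) (by positivity)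

theorem expFast_zero_of_le_succ_mul_pow {x : ℕ → ℝ} {C τ : ℝ} (hC : 0 ≤ C) (hτ0 : 0 ≤ τ)
    (hτ1 : τ < 1) (hx0 : ∀ n, 0 ≤ x n) (hx : ∀ n, x n ≤ C * ((n + 1) * τ ^ n)) :
    ExpFast x 0 := by
  obtain ⟨B, hB, hpoly⟩ := exists_succ_mul_pow_le hτ0 (show τ < (1 + τ) / 2 by linarith)
  refine ⟨C * B + 1, by positivity, (1 + τ) / 2, by linarith, by linarith, fun n => ?_⟩
  rw [sub_zero, abs_of_nonneg (hx0 n)]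
  calc x n ≤ C * (B * ((1 + τ) / 2) ^ n) := (hx n).trans (mul_le_mul_of_nonneg_left (hpoly n) hC)
    _ ≤ (C * B + 1) * ((1 + τ) / 2) ^ n := by
        rw [← mul_assoc]
        exact mul_le_mul_of_nonneg_right (by linarith) (by positivity)

theorem ExpNegligibleIn.exists_rho_le {r : ℕ} {S Z : Set (F r)} (h : ExpNegligibleIn S Z)
    (hSZ : S ⊆ Z) :
    ∃ C : ℝ, 0 < C ∧ ∃ σ : ℝ, 0 < σ ∧ σ < 1 ∧ ∀ n, (rho S n : ℝ) ≤ C * σ ^ n * rho Z n := by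
  obtain ⟨C, hC, σ, hσ0, hσ1, hbound⟩ := h
  refine ⟨C, hC, σ, hσ0, hσ1, fun n => ?_⟩
  rcases Nat.eq_zero_or_pos (rho Z n) with hZ | hZ
  · have : rho S n = 0 := Nat.eq_zero_of_le_zero (hZ ▸ rho_mono hSZ n)
    simp [this, hZ]
  · have := (le_abs_self _).trans (hbound n)
    rwa [sub_zero, div_le_iff₀ (by exact_mod_cast hZ)] at this

theorem pow_sub_mul_pow_le_max_sqrt_pow {σ s : ℝ} (hσ : 0 ≤ σ) (hs : 0 ≤ s) {n k : ℕ}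
    (hk : 2 * k ≤ n) : σ ^ (n - 2 * k) * s ^ k ≤ max σ √s ^ n := by
  calc σ ^ (n - 2 * k) * s ^ k = σ ^ (n - 2 * k) * √s ^ (2 * k) := by
        rw [pow_mul, Real.sq_sqrt hs]
    _ ≤ max σ √s ^ (n - 2 * k) * max σ √s ^ (2 * k) := by
        gcongr
        exacts [le_max_left _ _, le_max_right _ _]
    _ = max σ √s ^ n := by rw [← pow_add, Nat.sub_add_cancel hk]

section Density

variable {r : ℕ} {Z : Set (F r)} {C σ : ℝ}

theorem cast_two_mul_sub_one (hr : 1 ≤ r) : ((2 * r - 1 : ℕ) : ℝ) = 2 * r - 1 := by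
  rw [Nat.cast_sub (by omega)]
  push_cast
  ring

theorem one_lt_two_mul_sub_one (hr : 2 ≤ r) : (1 : ℝ) < 2 * r - 1 := by
  have : (2 : ℝ) ≤ r := by exact_mod_cast hr
  linarith

theorem rho_diff_mul_gam_le (hr : 2 ≤ r) (hC : 0 ≤ C) (hσ : 0 ≤ σ)
    (hZ : ∀ m, (rho (Ur r \ Z) m : ℝ) ≤ C * σ ^ m * rho (Ur r) m) {n k : ℕ}
    (hk : 2 * k ≤ n) :
    (rho (Ur r \ Z) (n - 2 * k) * gam (Set.univ : Set (F r)) k : ℝ) ≤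
      2 * C * (2 * r - 1) * (σ ^ (n - 2 * k) * (2 * r - 1 : ℝ)⁻¹ ^ k) * (2 * r - 1) ^ n := by
  have hcast := cast_two_mul_sub_one (r := r) (by omega)
  have ht : (0 : ℝ) < 2 * r - 1 := zero_lt_one.trans (one_lt_two_mul_sub_one hr)
  have hrho (m : ℕ) : (rho (Ur r) m : ℝ) ≤ (2 * r - 1) ^ (m + 1) := by
    rw [← hcast]; exact_mod_cast (rho_mono (Set.subset_univ _) m).trans (rho_univ_le hr m)
  have hgam : (gam (Set.univ : Set (F r)) k : ℝ) ≤ 2 * (2 * r - 1) ^ k := by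
    rw [← hcast]; exact_mod_cast gam_univ_le k
  have hsplit : ((2 : ℝ) * r - 1) ^ (n - 2 * k) * (2 * r - 1) ^ (2 * k) = (2 * r - 1) ^ n := by
    rw [← pow_add, Nat.sub_add_cancel hk]
  calc (rho (Ur r \ Z) (n - 2 * k) * gam (Set.univ : Set (F r)) k : ℝ)
      ≤ C * σ ^ (n - 2 * k) * (2 * r - 1) ^ (n - 2 * k + 1) * (2 * (2 * r - 1) ^ k) := by
        gcongr
        exact (hZ _).trans (mul_le_mul_of_nonneg_left (hrho _) (by positivity))
    _ = 2 * C * (2 * r - 1) * (σ ^ (n - 2 * k) * (2 * r - 1 : ℝ)⁻¹ ^ k) * (2 * r - 1) ^ n := by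
        have hinv : ((2 * r - 1 : ℝ)⁻¹) ^ k * ((2 * r - 1) ^ 2) ^ k = (2 * r - 1) ^ k := by
          rw [← mul_pow, sq, ← mul_assoc, inv_mul_cancel₀ ht.ne', one_mul]
        rw [← hsplit, pow_mul, pow_succ]
        linear_combination
          (2 * C * σ ^ (n - 2 * k) * (2 * r - 1) * (2 * r - 1) ^ (n - 2 * k)) * hinv.symm

theorem rho_univ_diff_zcirc_div_le (hr : 2 ≤ r) (hC : 0 ≤ C) (hσ : 0 ≤ σ)
    (hZ : ∀ m, (rho (Ur r \ Z) m : ℝ) ≤ C * σ ^ m * rho (Ur r) m)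
    (n : ℕ) :
    (rho (Set.univ \ Zcirc Z) n : ℝ) / rho (Set.univ : Set (F r)) n ≤
      2 * C * (2 * r - 1) * ((n + 1) * max σ √(2 * r - 1 : ℝ)⁻¹ ^ n) := by
  have hcast := cast_two_mul_sub_one (r := r) (by omega)
  have ht : (0 : ℝ) < 2 * r - 1 := zero_lt_one.trans (one_lt_two_mul_sub_one hr)
  have hden : ((2 : ℝ) * r - 1) ^ n ≤ rho (Set.univ : Set (F r)) n := by
    rw [← hcast]; exact_mod_cast pow_le_rho_univ n
  set τ := max σ √(2 * r - 1 : ℝ)⁻¹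
  have hterm : ∀ k ∈ Finset.range (n / 2 + 1),
      (rho (Ur r \ Z) (n - 2 * k) * gam (Set.univ : Set (F r)) k : ℝ) ≤
        2 * C * (2 * r - 1) * τ ^ n * (2 * r - 1) ^ n := by
    intro k hk
    have hk : 2 * k ≤ n := by rw [Finset.mem_range] at hk; omega
    refine (rho_diff_mul_gam_le hr hC hσ hZ hk).trans ?_
    gcongr
    exact pow_sub_mul_pow_le_max_sqrt_pow hσ (by positivity) hk
  rw [div_le_iff₀ ((pow_pos ht n).trans_le hden)]
  calc (rho (Set.univ \ Zcirc Z) n : ℝ)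
      ≤ ∑ k ∈ Finset.range (n / 2 + 1),
          (rho (Ur r \ Z) (n - 2 * k) * gam (Set.univ : Set (F r)) k : ℝ) := by
        exact_mod_cast rho_univ_diff_zcirc_le Z n
    _ ≤ (n / 2 + 1 : ℕ) * (2 * C * (2 * r - 1) * τ ^ n * (2 * r - 1) ^ n) := by
        simpa using Finset.sum_le_sum hterm
    _ ≤ (n + 1) * (2 * C * (2 * r - 1) * τ ^ n * (2 * r - 1) ^ n) := by
        gcongr
        exact_mod_cast Nat.succ_le_succ (Nat.div_le_self n 2)
    _ = 2 * C * (2 * r - 1) * ((n + 1) * τ ^ n) * (2 * r - 1) ^ n := by ring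
    _ ≤ 2 * C * (2 * r - 1) * ((n + 1) * τ ^ n) * rho Set.univ n := by gcongr

end Density

theorem zcirc_expGeneric_general (r : ℕ) (hr : 2 ≤ r) (Z : Set (F r))
    (h : ExpGenericIn Z (Ur r)) :
    ExpGenericIn (Zcirc Z) Set.univ := by
  obtain ⟨C, hC, σ, hσ0, hσ1, hZ⟩ := ExpNegligibleIn.exists_rho_le h Set.sdiff_subset
  have ht := one_lt_two_mul_sub_one hr
  have hsqrt : √(2 * r - 1 : ℝ)⁻¹ < 1 := by
    rw [Real.sqrt_lt' one_pos, one_pow]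
    exact inv_lt_one_of_one_lt₀ ht
  exact expFast_zero_of_le_succ_mul_pow (by positivity) (by positivity) (max_lt hσ1 hsqrt)
    (fun n => by positivity) (rho_univ_diff_zcirc_div_le hr hC.le hσ0.le hZ)

/-- If `Z ⊆ U_r` is exponentially generic in `U_r`, then `Z°` is
exponentially generic in `F_r`. -/
theorem zcirc_expGeneric (r : ℕ) (hr : 2 ≤ r) (Z : Set (F r)) (hZ : Z ⊆ Ur r)
    (h : ExpGenericIn Z (Ur r)) :
    ExpGenericIn (Zcirc Z) Set.univ :=
  zcirc_expGeneric_general r hr Z h
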